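/- Let G be a finite group with at least n nontrivial Sylow subgroups (counting all Sylow p-subgroups for all primes p dividing |G|). Then the number of subgroups of G not attaining the maximum Chermak–Delgado measure is at least n. -/

import Mathlib

/-!
The Chermak–Delgado measure `m(H) = |H| |C_G(H)|` is supermodular,
`m(H) m(K) ≤ m(H ⊔ K) m(H ⊓ K)`, since `|H| |K| ≤ |H ⊔ K| |H ⊓ K|` and the centralizers satisfy
`C(H) ⊔ C(K) ≤ C(H ⊓ K)` and `C(H) ⊓ C(K) ≤ C(H ⊔ K)`. So for `H, K` of maximal measure,
`H ⊓ K` has maximal measure too and `|H ⊔ K| |H ⊓ K| = |H| |K|`.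

If a nontrivial Sylow `p`-subgroup `S` and `⊥` both had maximal measure, then
`|S| |C_G(S)| = m(⊥) = |G|`, so `C_G(S)` would be a `p'`-group containing `Z(S) ≠ 1`.
Hence two distinct nontrivial Sylow subgroups cannot both have maximal measure: for different
primes their meet is `⊥`, and for the same prime `p` their join would be a `p`-group strictly
larger than a Sylow subgroup. So at most one nontrivial Sylow subgroup has maximal measure, and
if one does, `⊥` takes its place among the subgroups of non-maximal measure.
-/

/-- The Chermak–Delgado measure of a subgroup. -/
noncomputable def cdMeasure {G : Type*} [Group G] (H : Subgroup G) : ℕ :=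
  Nat.card H * Nat.card (Subgroup.centralizer (H : Set G))

open Subgroup

theorem Set.ncard_le_ncard_of_subsingleton_sdiff {α : Type*} [Finite α] {s t : Set α}
    (hst : (s \ t).Subsingleton) (hts : (s \ t).Nonempty → (t \ s).Nonempty) :
    s.ncard ≤ t.ncard := by
  rw [ncard_le_ncard_iff_ncard_sdiff_le_ncard_sdiff]
  rcases (s \ t).eq_empty_or_nonempty with h | h
  · simp [h]
  · calc (s \ t).ncard ≤ 1 := ncard_le_one_iff_subsingleton.mpr hst
      _ ≤ (t \ s).ncard := (ncard_pos).mpr (hts h)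

/-- The Chermak–Delgado lattice `CD(G)`. -/
def cdSubgroups (G : Type*) [Group G] : Set (Subgroup G) :=
  {H | ∀ K : Subgroup G, cdMeasure K ≤ cdMeasure H}

section ChermakDelgado

variable {G : Type*} [Group G]

theorem cdMeasure_bot : cdMeasure (⊥ : Subgroup G) = Nat.card G := by
  rw [cdMeasure, coe_bot, centralizer_eq_top_iff_subset.mpr (by simp), card_bot, card_top, one_mul]

variable [Finite G]

theorem card_mul_card_le_card_sup_mul_card_inf (H K : Subgroup G) :
    Nat.card H * Nat.card K ≤ Nat.card ↥(H ⊔ K) * Nat.card ↥(H ⊓ K) := by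
  have hH : Nat.card ↥(H ⊓ K) * K.relIndex H = Nat.card H := by
    rw [← inf_relIndex_left, ← relIndex_bot_left, ← relIndex_bot_left,
      relIndex_mul_relIndex _ _ _ bot_le inf_le_left]
  have hsup : Nat.card K * K.relIndex (H ⊔ K) = Nat.card ↥(H ⊔ K) := by
    rw [← relIndex_bot_left, ← relIndex_bot_left, relIndex_mul_relIndex _ _ _ bot_le le_sup_right]
  have hle : K.relIndex H ≤ K.relIndex (H ⊔ K) :=
    relIndex_le_of_le_right le_sup_left index_ne_zero_of_finite
  rw [← hH, ← hsup]
  calc Nat.card ↥(H ⊓ K) * K.relIndex H * Nat.card K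
      ≤ Nat.card ↥(H ⊓ K) * K.relIndex (H ⊔ K) * Nat.card K := by gcongr
    _ = Nat.card K * K.relIndex (H ⊔ K) * Nat.card ↥(H ⊓ K) := by ring

theorem card_centralizer_mul_card_centralizer_le (H K : Subgroup G) :
    Nat.card (centralizer (H : Set G)) * Nat.card (centralizer (K : Set G)) ≤
      Nat.card (centralizer ((H ⊓ K : Subgroup G) : Set G)) *
        Nat.card (centralizer ((H ⊔ K : Subgroup G) : Set G)) := by
  have hsup : centralizer (H : Set G) ⊔ centralizer (K : Set G) ≤
      centralizer ((H ⊓ K : Subgroup G) : Set G) :=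
    sup_le (centralizer_le inf_le_left) (centralizer_le inf_le_right)
  have hinf : centralizer (H : Set G) ⊓ centralizer (K : Set G) ≤
      centralizer ((H ⊔ K : Subgroup G) : Set G) :=
    le_centralizer_iff.mpr (sup_le (le_centralizer_iff.mpr inf_le_left)
      (le_centralizer_iff.mpr inf_le_right))
  exact (card_mul_card_le_card_sup_mul_card_inf _ _).trans
    (Nat.mul_le_mul (card_le_of_le hsup) (card_le_of_le hinf))

theorem cdMeasure_mul_cdMeasure_le (H K : Subgroup G) :
    cdMeasure H * cdMeasure K ≤ cdMeasure (H ⊔ K) * cdMeasure (H ⊓ K) := by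
  unfold cdMeasure
  calc _ = (Nat.card H * Nat.card K) *
        (Nat.card (centralizer (H : Set G)) * Nat.card (centralizer (K : Set G))) := by ring
    _ ≤ (Nat.card ↥(H ⊔ K) * Nat.card ↥(H ⊓ K)) *
        (Nat.card (centralizer ((H ⊓ K : Subgroup G) : Set G)) *
          Nat.card (centralizer ((H ⊔ K : Subgroup G) : Set G))) :=
      Nat.mul_le_mul (card_mul_card_le_card_sup_mul_card_inf H K)
        (card_centralizer_mul_card_centralizer_le H K)
    _ = _ := by ring

theorem cdMeasure_pos (H : Subgroup G) : 0 < cdMeasure H :=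
  Nat.mul_pos Nat.card_pos Nat.card_pos

theorem inf_mem_cdSubgroups {H K : Subgroup G} (hH : H ∈ cdSubgroups G) (hK : K ∈ cdSubgroups G) :
    H ⊓ K ∈ cdSubgroups G := by
  have hKH : cdMeasure K = cdMeasure H := le_antisymm (hH K) (hK H)
  have hle : cdMeasure H * cdMeasure H ≤ cdMeasure H * cdMeasure (H ⊓ K) :=
    calc cdMeasure H * cdMeasure H = cdMeasure H * cdMeasure K := by rw [hKH]
      _ ≤ cdMeasure (H ⊔ K) * cdMeasure (H ⊓ K) := cdMeasure_mul_cdMeasure_le H K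
      _ ≤ cdMeasure H * cdMeasure (H ⊓ K) := Nat.mul_le_mul_right _ (hH _)
  exact fun L => (hH L).trans (Nat.le_of_mul_le_mul_left hle (cdMeasure_pos H))

theorem card_sup_mul_card_inf_of_mem_cdSubgroups {H K : Subgroup G} (hH : H ∈ cdSubgroups G)
    (hK : K ∈ cdSubgroups G) :
    Nat.card ↥(H ⊔ K) * Nat.card ↥(H ⊓ K) = Nat.card H * Nat.card K := by
  set B := Nat.card (centralizer (H : Set G)) * Nat.card (centralizer (K : Set G))
  set B' := Nat.card (centralizer ((H ⊓ K : Subgroup G) : Set G)) *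
    Nat.card (centralizer ((H ⊔ K : Subgroup G) : Set G))
  have hM : Nat.card ↥(H ⊔ K) * Nat.card ↥(H ⊓ K) * B' ≤ Nat.card H * Nat.card K * B :=
    calc _ = cdMeasure (H ⊔ K) * cdMeasure (H ⊓ K) := by unfold cdMeasure; ring
      _ ≤ cdMeasure H * cdMeasure K := Nat.mul_le_mul (hH _) (hK _)
      _ = _ := by unfold cdMeasure; ring
  have hB : B ≤ B' := card_centralizer_mul_card_centralizer_le H K
  refine le_antisymm ?_ (card_mul_card_le_card_sup_mul_card_inf H K)
  exact Nat.le_of_mul_le_mul_right ((Nat.mul_le_mul_left _ hB).trans hM)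
    (Nat.mul_pos Nat.card_pos Nat.card_pos)

theorem IsPGroup.not_disjoint_centralizer {p : ℕ} [Fact p.Prime] {H : Subgroup G}
    (hH : IsPGroup p H) (hne : H ≠ ⊥) : ¬ Disjoint H (centralizer (H : Set G)) := by
  have : Nontrivial H := (nontrivial_iff_ne_bot H).mpr hne
  have := hH.center_nontrivial
  obtain ⟨z, hz⟩ := exists_ne (1 : center H)
  refine fun hdisj => hz (Subtype.ext (Subtype.ext (disjoint_def.mp hdisj (z : H).2 ?_)))
  exact mem_centralizer_iff.mpr fun h hh => congrArg Subtype.val (mem_center_iff.mp z.2 ⟨h, hh⟩)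

namespace Sylow

variable {p : ℕ} [Fact p.Prime]

theorem eq_bot_of_cdMeasure_eq_card (S : Sylow p G) (h : cdMeasure (S : Subgroup G) = Nat.card G) :
    (S : Subgroup G) = ⊥ := by
  by_contra hne
  have hC : Nat.card (centralizer (S : Set G)) = (S : Subgroup G).index :=
    Nat.eq_of_mul_eq_mul_left Nat.card_pos (h.trans (card_mul_index _).symm)
  exact S.isPGroup'.not_disjoint_centralizer hne
    (disjoint_of_coprime_natCard (hC ▸ S.card_coprime_index))

theorem bot_notMem_cdSubgroups (S : Sylow p G) (hS : (S : Subgroup G) ≠ ⊥)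
    (hmem : (S : Subgroup G) ∈ cdSubgroups G) : ⊥ ∉ cdSubgroups G := fun hbot =>
  hS (S.eq_bot_of_cdMeasure_eq_card ((le_antisymm (hbot _) (hmem ⊥)).trans cdMeasure_bot))

theorem eq_of_card_sup_mul_card_inf (S T : Sylow p G)
    (h : Nat.card ↥((S : Subgroup G) ⊔ T) * Nat.card ↥((S : Subgroup G) ⊓ T) =
      Nat.card (S : Subgroup G) * Nat.card (T : Subgroup G)) : S = T := by
  obtain ⟨a, ha⟩ := IsPGroup.iff_card.mp S.isPGroup'
  obtain ⟨b, hb⟩ := IsPGroup.iff_card.mp T.isPGroup'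
  have hpg : IsPGroup p ↥((S : Subgroup G) ⊔ T) := IsPGroup.of_card_dvd_pow (n := a + b) <| by
    rw [pow_add, ← ha, ← hb, ← h]
    exact dvd_mul_right _ _
  exact Sylow.ext ((S.is_maximal' hpg le_sup_left).symm.trans (T.is_maximal' hpg le_sup_right))

theorem coe_eq_of_mem_cdSubgroups {q : ℕ} [Fact q.Prime] (S : Sylow p G) (T : Sylow q G)
    (hS : (S : Subgroup G) ≠ ⊥) (hSmem : (S : Subgroup G) ∈ cdSubgroups G)
    (hTmem : (T : Subgroup G) ∈ cdSubgroups G) : (S : Subgroup G) = T := by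
  obtain rfl | hpq := eq_or_ne p q
  · exact congrArg _ (S.eq_of_card_sup_mul_card_inf T
      (card_sup_mul_card_inf_of_mem_cdSubgroups hSmem hTmem))
  · have hinf : (S : Subgroup G) ⊓ T = ⊥ :=
      (IsPGroup.disjoint_of_ne p q hpq _ _ S.isPGroup' T.isPGroup').eq_bot
    exact absurd (hinf ▸ inf_mem_cdSubgroups hSmem hTmem) (S.bot_notMem_cdSubgroups hS hSmem)

end Sylow

end ChermakDelgado

theorem delta_cd_ge_num_nontrivial_sylow
    (G : Type*) [Group G] [Finite G] (n : ℕ)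
    (hn : n ≤ Nat.card {H : Subgroup G //
      H ≠ ⊥ ∧ ∃ (p : ℕ), p.Prime ∧ ∃ S : Sylow p G, (S : Subgroup G) = H}) :
    n ≤ Nat.card {H : Subgroup G //
      ¬ ∀ K : Subgroup G, cdMeasure K ≤ cdMeasure H} := by
  refine hn.trans (Set.ncard_le_ncard_of_subsingleton_sdiff (t := (cdSubgroups G)ᶜ) ?_ ?_)
  · rintro _ ⟨⟨hS, p, hp, S, rfl⟩, hScd⟩ _ ⟨⟨-, q, hq, T, rfl⟩, hTcd⟩
    have := Fact.mk hp
    have := Fact.mk hq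
    exact S.coe_eq_of_mem_cdSubgroups T hS (not_not.mp hScd) (not_not.mp hTcd)
  · rintro ⟨_, ⟨hS, p, hp, S, rfl⟩, hScd⟩
    have := Fact.mk hp
    exact ⟨⊥, S.bot_notMem_cdSubgroups hS (not_not.mp hScd), fun h => h.1 rfl⟩
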